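/- arXiv:1008.4514 — 2 statements merged into one kernel-verified Lean document; each statement's English description precedes it below -/
import Mathlib

section
/- The explicit gap soliton profile U(x) = √(1-ω²) / (√(1-ω) cosh(√(1-ω²) x) + i √(1+ω) sinh(√(1-ω²) x)), with V(x) = conj(U(x)), solves the stationary nonlinear Dirac system for W_N = (1/3)(|u|⁴ + 4|u|²|v|² + |v|⁴), which reduces to -i U'(x) - conj(U(x)) + 2|U(x)|² U(x) = ω U(x) for all x ∈ ℝ and all ω ∈ (-1,1). -/
theorem gap_soliton_expand_aux (A B Cc S M W : ℂ) (hD : A*Cc + Complex.I*B*S ≠ 0)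
    (hE : A*Cc - Complex.I*B*S ≠ 0) :
    (-Complex.I * ((0*(A*Cc+Complex.I*B*S) - M*(M*(A*S+Complex.I*B*Cc)))/(A*Cc+Complex.I*B*S)^2)
      - M/(A*Cc - Complex.I*B*S)
      + 2*(M/(A*Cc+Complex.I*B*S) * (M/(A*Cc-Complex.I*B*S)))*(M/(A*Cc+Complex.I*B*S)))
      - W*(M/(A*Cc+Complex.I*B*S))
    = (Complex.I * M^2 * (A*S + Complex.I*B*Cc) * (A*Cc - Complex.I*B*S)
        - M * (A*Cc + Complex.I*B*S)^2 + 2*M^3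
        - W * M * ((A*Cc + Complex.I*B*S) * (A*Cc - Complex.I*B*S)))
      / ((A*Cc+Complex.I*B*S)^2 * (A*Cc - Complex.I*B*S)) := by
  rw [eq_div_iff (mul_ne_zero (pow_ne_zero 2 hD) hE)]
  field_simp
  ring

/-- The explicit gap soliton profile
`U(x) = √(1-ω²) / (√(1-ω) cosh(√(1-ω²) x) + i √(1+ω) sinh(√(1-ω²) x))`
solves the stationary nonlinear Dirac equation
`-i U'(x) - conj(U(x)) + 2 |U(x)|² U(x) = ω U(x)` for all `x ∈ ℝ` and `ω ∈ (-1,1)`. -/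
theorem gap_soliton_solves_stationary_equation
    (ω : ℝ) (hω : -1 < ω ∧ ω < 1)
    (μ : ℝ) (hμ : μ = Real.sqrt (1 - ω ^ 2))
    (U : ℝ → ℂ)
    (hU : ∀ x : ℝ, U x = (μ : ℂ) /
      ((Real.sqrt (1 - ω) : ℝ) * Real.cosh (μ * x)
        + Complex.I * (Real.sqrt (1 + ω) : ℝ) * Real.sinh (μ * x))) :
    ∀ x : ℝ,
      -Complex.I * deriv U x - (starRingEnd ℂ) (U x)
          + 2 * ((‖U x‖ : ℝ) : ℂ) ^ 2 * U x
        = (ω : ℂ) * U x := by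
  intro x
  obtain ⟨hω1, hω2⟩ := hω
  set a : ℝ := Real.sqrt (1 - ω) with ha_def
  set b : ℝ := Real.sqrt (1 + ω) with hb_def
  have h1ω : (0:ℝ) ≤ 1 - ω := by linarith
  have h1ω' : (0:ℝ) ≤ 1 + ω := by linarith
  have ha2 : a ^ 2 = 1 - ω := Real.sq_sqrt h1ω
  have hb2 : b ^ 2 = 1 + ω := Real.sq_sqrt h1ω'
  have hapos : 0 < a := Real.sqrt_pos.mpr (by linarith)
  have hab : a * b = μ := by
    rw [ha_def, hb_def, ← Real.sqrt_mul h1ω, hμ]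
    ring_nf
  have hμ2 : μ ^ 2 = 1 - ω ^ 2 := by
    rw [hμ]; exact Real.sq_sqrt (by nlinarith)
  -- shorthand
  set c : ℝ := Real.cosh (μ * x) with hc_def
  set s : ℝ := Real.sinh (μ * x) with hs_def
  have hcs : c ^ 2 = 1 + s ^ 2 := by
    have := Real.cosh_sq_sub_sinh_sq (μ * x)
    nlinarith
  have hcpos : 0 < c := Real.cosh_pos (μ * x)
  set D : ℂ := (a : ℂ) * c + Complex.I * b * s with hD_def
  have hDne : D ≠ 0 := by
    intro h
    have hre := congrArg Complex.re h
    simp [hD_def, Complex.add_re, Complex.mul_re] at hre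
    rcases hre with h' | h' <;> linarith
  have hDconj : (starRingEnd ℂ) D = (a : ℂ) * c - Complex.I * b * s := by
    simp [hD_def, map_add, map_mul, Complex.conj_ofReal, Complex.conj_I]
    ring
  have hDcne : (starRingEnd ℂ) D ≠ 0 := by
    show star D ≠ 0
    exact star_ne_zero.mpr hDne
  -- derivative of U
  have hderivD : HasDerivAt
      (fun y : ℝ => ((a : ℂ) * Real.cosh (μ * y) + Complex.I * b * Real.sinh (μ * y)))
      ((μ : ℂ) * ((a : ℂ) * s + Complex.I * b * c)) x := by
    have hcosh : HasDerivAt (fun y : ℝ => ((Real.cosh (μ * y) : ℝ) : ℂ))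
        ((μ * Real.sinh (μ * x) : ℝ) : ℂ) x := by
      have h : HasDerivAt (fun y : ℝ => Real.cosh (μ * y)) (μ * Real.sinh (μ * x)) x := by
        simpa [mul_comm, Function.comp_def] using
          (Real.hasDerivAt_cosh (μ * x)).comp x ((hasDerivAt_id x).const_mul μ)
      exact h.ofReal_comp
    have hsinh : HasDerivAt (fun y : ℝ => ((Real.sinh (μ * y) : ℝ) : ℂ))
        ((μ * Real.cosh (μ * x) : ℝ) : ℂ) x := by
      have h : HasDerivAt (fun y : ℝ => Real.sinh (μ * y)) (μ * Real.cosh (μ * x)) x := by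
        simpa [mul_comm, Function.comp_def] using
          (Real.hasDerivAt_sinh (μ * x)).comp x ((hasDerivAt_id x).const_mul μ)
      exact h.ofReal_comp
    have h2 := (hcosh.const_mul ((a : ℝ) : ℂ)).add (hsinh.const_mul (Complex.I * b))
    refine h2.congr_deriv ?_
    rw [← hc_def, ← hs_def]
    push_cast
    ring
  have hUfun : U = fun y : ℝ => (μ : ℂ) /
      ((a : ℂ) * Real.cosh (μ * y) + Complex.I * b * Real.sinh (μ * y)) := by
    funext y
    rw [hU y]
  have hderivU : HasDerivAt U
      ((0 * D - (μ : ℂ) * ((μ : ℂ) * ((a : ℂ) * s + Complex.I * b * c))) / D ^ 2) x := by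
    rw [hUfun]
    exact (hasDerivAt_const x ((μ : ℂ))).div hderivD hDne
  have hUx : U x = (μ : ℂ) / D := by rw [hU x, hD_def]
  have hUconj : (starRingEnd ℂ) (U x) = (μ : ℂ) / (starRingEnd ℂ) D := by
    rw [hUx, map_div₀, Complex.conj_ofReal]
  have habs : ((‖U x‖ : ℝ) : ℂ) ^ 2 = U x * (starRingEnd ℂ) (U x) := by
    rw [← Complex.ofReal_pow, Complex.sq_norm, Complex.mul_conj]
  rw [hderivU.deriv, habs, hUconj, hUx, hDconj]
  have hμC : ((a : ℂ) * b) = (μ : ℂ) := by exact_mod_cast congrArg Complex.ofReal hab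
  have ha2C : ((a : ℂ)) ^ 2 = 1 - ω := by exact_mod_cast congrArg Complex.ofReal ha2
  have hb2C : ((b : ℂ)) ^ 2 = 1 + ω := by exact_mod_cast congrArg Complex.ofReal hb2
  have hμ2C : ((μ : ℂ)) ^ 2 = 1 - (ω : ℂ) ^ 2 := by exact_mod_cast congrArg Complex.ofReal hμ2
  have hcsC : ((c : ℂ)) ^ 2 = 1 + (s : ℂ) ^ 2 := by exact_mod_cast congrArg Complex.ofReal hcs
  have hDconj_ne : ((a : ℂ) * c - Complex.I * b * s) ≠ 0 := by rw [← hDconj]; exact hDcne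
  have hDne' : ((a : ℂ) * c + Complex.I * b * s) ≠ 0 := hD_def ▸ hDne
  have key : Complex.I * (μ:ℂ)^2 * ((a:ℂ)*s + Complex.I*b*c) * ((a:ℂ)*c - Complex.I*b*s)
      - (μ:ℂ) * ((a:ℂ)*c + Complex.I*b*s)^2 + 2*(μ:ℂ)^3
      - (ω:ℂ) * μ * (((a:ℂ)*c + Complex.I*b*s) * ((a:ℂ)*c - Complex.I*b*s)) = 0 := by
    linear_combination
      ((μ:ℂ)^2*a*b*((c:ℂ)^2-(s:ℂ)^2) - Complex.I*(μ:ℂ)^2*b^2*c*s - (μ:ℂ)*b^2*s^2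
          + (ω:ℂ)*μ*b^2*s^2) * Complex.I_sq
      + (-2*Complex.I*(μ:ℂ)*c*s - (μ:ℂ)^2*((c:ℂ)^2-(s:ℂ)^2)) * hμC
      + (Complex.I*(μ:ℂ)^2*c*s - (μ:ℂ)*(1+(ω:ℂ))*(c:ℂ)^2) * ha2C
      + (Complex.I*(μ:ℂ)^2*c*s + (μ:ℂ)*(1-(ω:ℂ))*(s:ℂ)^2) * hb2C
      + (μ:ℂ) * hμ2C
      + (-(μ:ℂ)^3 - (μ:ℂ)*(1-(ω:ℂ)^2)) * hcsC
  rw [← sub_eq_zero]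
  have expand : (-Complex.I * ((0 * D - (μ:ℂ) * ((μ:ℂ) * ((a:ℂ) * s + Complex.I * b * c))) / D ^ 2)
        - (μ:ℂ) / ((a:ℂ) * c - Complex.I * b * s)
        + 2 * ((μ:ℂ) / D * ((μ:ℂ) / ((a:ℂ) * c - Complex.I * b * s))) * ((μ:ℂ) / D))
        - (ω:ℂ) * ((μ:ℂ) / D)
      = (Complex.I * (μ:ℂ)^2 * ((a:ℂ)*s + Complex.I*b*c) * ((a:ℂ)*c - Complex.I*b*s)
          - (μ:ℂ) * ((a:ℂ)*c + Complex.I*b*s)^2 + 2*(μ:ℂ)^3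
          - (ω:ℂ) * μ * (((a:ℂ)*c + Complex.I*b*s) * ((a:ℂ)*c - Complex.I*b*s)))
        / (D^2 * ((a:ℂ)*c - Complex.I*b*s)) := by
    rw [hD_def]
    exact gap_soliton_expand_aux _ _ _ _ _ _ hDne' hDconj_ne
  rw [expand, key, zero_div]
end

section
/- Decay of Jost function remainders: suppose m : [0,∞) → ℂ² satisfies the Volterra integral equation m(x) = m_∞ + ∫ₓ^∞ G(x-y) V(y) m(y) dy where |G(z)| ≤ C₁⟨z⟩ for z ≤ 0, ‖m‖_{L^∞([0,∞))} ≤ C₂, and |V(y)| ≤ K⟨y⟩⁻³. Then |m(x) - m_∞| ≤ C K ⟨x⟩⁻¹ for all x ≥ 0, with C depending only on C₁, C₂. In particular m - m_∞ ∈ L²(0,∞). -/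
/-! For `0 ≤ x ≤ y` we have `⟨x - y⟩ ≤ ⟨y⟩`, so the integrand of the Volterra equation is
`O(⟨y⟩⁻²)` and `m x - mInf` is bounded by a multiple of `∫ₓ^∞ ⟨y⟩⁻² dy = π/2 - arctan x`.
Since `sin (π/2 - arctan x) = ⟨x⟩⁻¹`, Jordan's inequality `2θ/π ≤ sin θ` bounds this by
`(π/2) ⟨x⟩⁻¹`, which is square integrable. -/

open MeasureTheory Matrix Real

namespace Matrix

section Frobenius

attribute [local instance] frobeniusNormedAddCommGroup

variable {m n 𝕜 : Type*} [Fintype m] [Fintype n] [RCLike 𝕜]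

theorem frobenius_norm_le_of_forall_norm_le {A : Matrix m n 𝕜} {a : ℝ} (ha : 0 ≤ a)
    (h : ∀ i j, ‖A i j‖ ≤ a) : ‖A‖ ≤ √(Fintype.card m * Fintype.card n) * a := by
  rw [frobenius_norm_def, ← sqrt_eq_rpow]
  calc √(∑ i, ∑ j, ‖A i j‖ ^ (2 : ℝ)) ≤ √(∑ _i : m, ∑ _j : n, a ^ (2 : ℝ)) := by
        gcongr with i _ j _
        exact h i j
    _ = √(Fintype.card m * Fintype.card n) * a := by
        simp only [Finset.sum_const, Finset.card_univ, nsmul_eq_mul, rpow_two, ← mul_assoc]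
        rw [sqrt_mul (by positivity), sqrt_sq ha]

theorem frobenius_norm_mulVec (A : Matrix m n 𝕜) (v : n → 𝕜) :
    ‖WithLp.toLp 2 (A *ᵥ v)‖ ≤ ‖A‖ * ‖WithLp.toLp 2 v‖ := by
  simpa only [← frobenius_norm_replicateCol (ι := Unit), replicateCol_mulVec] using
    frobenius_norm_mul A (replicateCol Unit v)

end Frobenius

end Matrix

theorem sqrt_one_add_sq_sub_le {x y : ℝ} (hx : 0 ≤ x) (hxy : x ≤ y) :
    √(1 + (x - y) ^ 2) ≤ √(1 + y ^ 2) :=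
  sqrt_le_sqrt (by nlinarith)

theorem pi_div_two_sub_arctan_le {x : ℝ} (hx : 0 ≤ x) :
    π / 2 - arctan x ≤ π / 2 * (√(1 + x ^ 2))⁻¹ := by
  have hθ := mul_le_sin (x := π / 2 - arctan x) (by linarith [arctan_lt_pi_div_two x])
    (by linarith [arctan_nonneg.2 hx])
  rw [sin_pi_div_two_sub, cos_arctan, one_div] at hθ
  have := pi_pos
  calc π / 2 - arctan x = π / 2 * (2 / π * (π / 2 - arctan x)) := by field_simp
    _ ≤ π / 2 * (√(1 + x ^ 2))⁻¹ := by gcongr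

theorem memLp_two_inv_sqrt_one_add_sq :
    MemLp (fun x : ℝ => (√(1 + x ^ 2))⁻¹) 2 volume := by
  have hmeas : AEStronglyMeasurable (fun x : ℝ => (√(1 + x ^ 2))⁻¹) volume := by fun_prop
  rw [memLp_two_iff_integrable_sq hmeas]
  simpa only [inv_pow, sq_sqrt (by positivity : (0:ℝ) ≤ 1 + _ ^ 2)] using integrable_inv_one_add_sq

section Volterra

attribute [local instance] frobeniusNormedAddCommGroup

variable {𝕜 ι : Type*} [RCLike 𝕜] [Fintype ι] {G V : ℝ → Matrix ι ι 𝕜}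
  {m : ℝ → EuclideanSpace 𝕜 ι} {C₁ C₂ K : ℝ}

theorem norm_kernel_mulVec_le (hC₁ : 0 ≤ C₁) (hK : 0 ≤ K)
    (hG : ∀ z : ℝ, z ≤ 0 → ∀ i j, ‖G z i j‖ ≤ C₁ * √(1 + z ^ 2))
    (hV : ∀ y : ℝ, 0 ≤ y → ∀ i j, ‖V y i j‖ ≤ K * (√(1 + y ^ 2))⁻¹ ^ 3)
    (hm : ∀ x : ℝ, 0 ≤ x → ‖m x‖ ≤ C₂) {x y : ℝ} (hx : 0 ≤ x) (hxy : x ≤ y) :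
    ‖(WithLp.equiv 2 (ι → 𝕜)).symm ((G (x - y) * V y) *ᵥ m y)‖ ≤
      Fintype.card ι ^ 2 * C₁ * C₂ * K * (1 + y ^ 2)⁻¹ := by
  have hy : 0 ≤ y := hx.trans hxy
  have hsq : √(Fintype.card ι * Fintype.card ι : ℝ) = Fintype.card ι :=
    sqrt_mul_self (by positivity)
  have hGn : ‖G (x - y)‖ ≤ Fintype.card ι * (C₁ * √(1 + y ^ 2)) := by
    grw [← sqrt_one_add_sq_sub_le hx hxy, ← hsq]
    exact frobenius_norm_le_of_forall_norm_le (by positivity) (hG _ (by linarith))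
  have hVn : ‖V y‖ ≤ Fintype.card ι * (K * (√(1 + y ^ 2))⁻¹ ^ 3) := by
    rw [← hsq]
    exact frobenius_norm_le_of_forall_norm_le (by positivity) (hV y hy)
  calc ‖(WithLp.equiv 2 (ι → 𝕜)).symm ((G (x - y) * V y) *ᵥ m y)‖
      ≤ ‖G (x - y) * V y‖ * ‖m y‖ := by
        simpa only [WithLp.equiv_symm_apply, WithLp.toLp_ofLp] using
          frobenius_norm_mulVec _ (m y).ofLp
    _ ≤ ‖G (x - y)‖ * ‖V y‖ * ‖m y‖ := by gcongr; exact frobenius_norm_mul _ _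
    _ ≤ (Fintype.card ι * (C₁ * √(1 + y ^ 2))) * (Fintype.card ι * (K * (√(1 + y ^ 2))⁻¹ ^ 3))
          * C₂ := by
        gcongr
        exact hm y hy
    _ = Fintype.card ι ^ 2 * C₁ * C₂ * K * (1 + y ^ 2)⁻¹ := by
        field_simp
        rw [sq_sqrt (by positivity)]

theorem norm_sub_le_of_eq_add_integral (hC₁ : 0 ≤ C₁) (hC₂ : 0 ≤ C₂) (hK : 0 ≤ K)
    (hG : ∀ z : ℝ, z ≤ 0 → ∀ i j, ‖G z i j‖ ≤ C₁ * √(1 + z ^ 2))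
    (hV : ∀ y : ℝ, 0 ≤ y → ∀ i j, ‖V y i j‖ ≤ K * (√(1 + y ^ 2))⁻¹ ^ 3)
    (hm : ∀ x : ℝ, 0 ≤ x → ‖m x‖ ≤ C₂) {mInf : EuclideanSpace 𝕜 ι} {x : ℝ} (hx : 0 ≤ x)
    (heq : m x = mInf +
      ∫ y in Set.Ioi x, (WithLp.equiv 2 (ι → 𝕜)).symm ((G (x - y) * V y) *ᵥ m y)) :
    ‖m x - mInf‖ ≤ Fintype.card ι ^ 2 * C₁ * C₂ * K * (π / 2) * (√(1 + x ^ 2))⁻¹ := by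
  set c := Fintype.card ι ^ 2 * C₁ * C₂ * K
  rw [heq, add_sub_cancel_left]
  calc ‖∫ y in Set.Ioi x, (WithLp.equiv 2 (ι → 𝕜)).symm ((G (x - y) * V y) *ᵥ m y)‖
      ≤ ∫ y in Set.Ioi x, c * (1 + y ^ 2)⁻¹ :=
        norm_integral_le_of_norm_le (integrable_inv_one_add_sq.const_mul c).restrict
          (ae_restrict_of_forall_mem measurableSet_Ioi fun y hy =>
            norm_kernel_mulVec_le hC₁ hK hG hV hm hx (le_of_lt hy))
    _ = c * (π / 2 - arctan x) := by rw [integral_const_mul, integral_Ioi_inv_one_add_sq]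
    _ ≤ c * (π / 2 * (√(1 + x ^ 2))⁻¹) := by gcongr; exact pi_div_two_sub_arctan_le hx
    _ = c * (π / 2) * (√(1 + x ^ 2))⁻¹ := by ring

end Volterra

/-- Decay of Jost function remainders: if `m(x) = mInf + ∫ₓ^∞ G(x-y) V(y) m(y) dy` with
`‖G(z)‖ ≤ C₁⟨z⟩`, `‖m‖ ≤ C₂`, `‖V(y)‖ ≤ K⟨y⟩⁻³`, then `‖m(x) - mInf‖ ≤ C K ⟨x⟩⁻¹` for
`x ≥ 0` with `C = C(C₁,C₂)`; in particular `m - mInf ∈ L²(0,∞)`. -/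
theorem jost_remainder_decay
    (G V : ℝ → Matrix (Fin 2) (Fin 2) ℂ)
    (m : ℝ → EuclideanSpace ℂ (Fin 2)) (mInf : EuclideanSpace ℂ (Fin 2))
    (C₁ C₂ K : ℝ) (hC₁ : 0 < C₁) (hC₂ : 0 < C₂) (hK : 0 < K)
    (hG : ∀ z : ℝ, z ≤ 0 → ∀ i j, ‖G z i j‖ ≤ C₁ * Real.sqrt (1 + z ^ 2))
    (hV : ∀ y : ℝ, 0 ≤ y → ∀ i j, ‖V y i j‖ ≤ K * (Real.sqrt (1 + y ^ 2))⁻¹ ^ 3)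
    (hm : ∀ x : ℝ, 0 ≤ x → ‖m x‖ ≤ C₂)
    (hmeas : AEStronglyMeasurable m (volume : MeasureTheory.Measure ℝ))
    (heq : ∀ x : ℝ, 0 ≤ x →
      m x = mInf + ∫ y in Set.Ioi x, (WithLp.equiv 2 (Fin 2 → ℂ)).symm ((G (x - y) * V y).mulVec (m y))) :
    ∃ C : ℝ, 0 < C ∧
      (∀ x : ℝ, 0 ≤ x → ‖m x - mInf‖ ≤ C * K * (Real.sqrt (1 + x ^ 2))⁻¹) ∧
      MemLp (fun x => m x - mInf) 2 (volume.restrict (Set.Ioi (0 : ℝ))) := by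
  set C : ℝ := Fintype.card (Fin 2) ^ 2 * C₁ * C₂ * (π / 2)
  have hbound : ∀ x : ℝ, 0 ≤ x → ‖m x - mInf‖ ≤ C * K * (√(1 + x ^ 2))⁻¹ := fun x hx =>
    (norm_sub_le_of_eq_add_integral hC₁.le hC₂.le hK.le hG hV hm hx (heq x hx)).trans_eq
      (by ring)
  refine ⟨C, by positivity, hbound, ?_⟩
  refine ((memLp_two_inv_sqrt_one_add_sq.const_mul (C * K)).restrict _).of_le
    (hmeas.sub aestronglyMeasurable_const).restrict
    (ae_restrict_of_forall_mem measurableSet_Ioi fun x hx => ?_)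
  rw [norm_of_nonneg (by positivity)]
  exact hbound x (le_of_lt hx)
end
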